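/- For all integers k >= 1 and n >= 7*k + 2, binom(n-k-2, k) > binom(n-k-1, k-1) + binom(n-k-2, k-2), i.e., binom(n-k-2, k) > f_{2k-1}(C_{2k}(n)) - f_{2k-1}(C_{2k}(n-1)), where f_{2k-1}(C_{2k}(n)) = binom(n-k, k) + binom(n-k-1, k-1). -/
import Mathlib

theorem stmt13 (k n : ℕ) (hk : 1 ≤ k) (hn : 7 * k + 2 ≤ n) :
    (n - k - 2).choose k > (n - k - 1).choose (k - 1) + (n - k - 2).choose (k - 2) ∧
    (n - k - 2).choose k >
      ((n - k).choose k + (n - k - 1).choose (k - 1)) -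
        (((n - 1) - k).choose k + ((n - 1) - k - 1).choose (k - 1)) := by
  rcases eq_or_lt_of_le hk with h1 | h2
  · -- k = 1
    subst h1
    simp only [show (1:ℕ)-2 = 0 from rfl, show (1:ℕ)-1 = 0 from rfl,
      Nat.choose_one_right, Nat.choose_zero_right]
    omega
  · -- k ≥ 2
    obtain ⟨j, rfl⟩ : ∃ j, k = j + 2 := ⟨k - 2, by omega⟩
    obtain ⟨m, hm⟩ : ∃ m, n - (j+2) - 2 = m := ⟨_, rfl⟩
    have hm6 : 6 * j + 12 ≤ m := by omega
    have e1 : n - (j+2) - 1 = m + 1 := by omega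
    have e2 : n - (j+2) = m + 2 := by omega
    have e3 : (n-1) - (j+2) = m + 1 := by omega
    have e4 : (n-1) - (j+2) - 1 = m := by omega
    have ek1 : j + 2 - 1 = j + 1 := by omega
    have ek2 : j + 2 - 2 = j := by omega
    rw [hm, e1, e2, e4, e3, ek1, ek2]
    have p0 : 0 < m.choose j := Nat.choose_pos (by omega)
    have p1 : 0 < m.choose (j+1) := Nat.choose_pos (by omega)
    have r1 : m.choose (j+1) * (j+1) = m.choose j * (m - j) := Nat.choose_succ_right_eq m j
    have r2 : m.choose (j+2) * (j+2) = m.choose (j+1) * (m - (j+1)) := Nat.choose_succ_right_eq m (j+1)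
    have h4 : 4 * m.choose j ≤ m.choose (j+1) := by
      have : m.choose j * (4 * (j+1)) ≤ m.choose j * (m - j) :=
        Nat.mul_le_mul_left _ (by omega)
      have h := r1 ▸ this
      refine Nat.le_of_mul_le_mul_right ?_ (show 0 < j+1 by omega)
      calc (4 * m.choose j) * (j+1) = m.choose j * (4 * (j+1)) := by ring
        _ ≤ m.choose (j+1) * (j+1) := h
    have h5 : 2 * m.choose (j+1) ≤ m.choose (j+2) := by
      have : m.choose (j+1) * (2 * (j+2)) ≤ m.choose (j+1) * (m - (j+1)) :=
        Nat.mul_le_mul_left _ (by omega)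
      have h := r2 ▸ this
      refine Nat.le_of_mul_le_mul_right ?_ (show 0 < j+2 by omega)
      calc (2 * m.choose (j+1)) * (j+2) = m.choose (j+1) * (2 * (j+2)) := by ring
        _ ≤ m.choose (j+2) * (j+2) := h
    have pas1 : (m+1).choose (j+1) = m.choose j + m.choose (j+1) := Nat.choose_succ_succ m j
    have pas2 : (m+2).choose (j+2) = (m+1).choose (j+1) + (m+1).choose (j+2) := Nat.choose_succ_succ (m+1) (j+1)
    constructor
    · omega
    · omega
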